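/- Equivalence of category-theoretical and set-theoretical unsatisfiability (Theorem 2): let O be an ALC ontology, C an ALC concept, and ⟶_O the arrow relation of the ontology category defined in the context. Then C ⟶_O ⊥ holds if and only if C is set-theoretically unsatisfiable with respect to O (i.e., C^I = ∅ in every model I of O). -/
import Mathlib


/-- ALC concepts over concept names `CN` and role names `RN`. -/
inductive ALCConcept (CN RN : Type) where
  | atom : CN → ALCConcept CN RN
  | top : ALCConcept CN RN
  | bot : ALCConcept CN RN
  | neg : ALCConcept CN RN → ALCConcept CN RN
  | inf : ALCConcept CN RN → ALCConcept CN RN → ALCConcept CN RN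
  | sup : ALCConcept CN RN → ALCConcept CN RN → ALCConcept CN RN
  | ex : RN → ALCConcept CN RN → ALCConcept CN RN
  | all : RN → ALCConcept CN RN → ALCConcept CN RN

/-- An interpretation: a nonempty domain together with interpretations of
concept names and role names. -/
structure ALCInterp (CN RN : Type) where
  Δ : Type
  nonempty : Nonempty Δ
  conceptI : CN → Set Δ
  roleI : RN → Set (Δ × Δ)

/-- Set-theoretical semantics of ALC concepts. -/
def ALCInterp.interp {CN RN : Type} (I : ALCInterp CN RN) :
    ALCConcept CN RN → Set I.Δ
  | .atom A => I.conceptI A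
  | .top => Set.univ
  | .bot => ∅
  | .neg C => (I.interp C)ᶜ
  | .inf C D => I.interp C ∩ I.interp D
  | .sup C D => I.interp C ∪ I.interp D
  | .ex R C => {x | ∃ y, (x, y) ∈ I.roleI R ∧ y ∈ I.interp C}
  | .all R C => {x | ∀ y, (x, y) ∈ I.roleI R → y ∈ I.interp C}

/-- `I` is a model of the ontology `O` (a set of GCIs `E ⊑ F`). -/
def ALCInterp.isModel {CN RN : Type} (I : ALCInterp CN RN)
    (O : Set (ALCConcept CN RN × ALCConcept CN RN)) : Prop :=
  ∀ p ∈ O, I.interp p.1 ⊆ I.interp p.2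

/-- The arrow relation `⟶_O` of the ontology category: the smallest reflexive
and transitive relation on ALC concepts containing the listed arrows. -/
inductive ALCArrow {CN RN : Type} (O : Set (ALCConcept CN RN × ALCConcept CN RN)) :
    ALCConcept CN RN → ALCConcept CN RN → Prop
  | refl (X : ALCConcept CN RN) : ALCArrow O X X
  | trans {X Y Z : ALCConcept CN RN} :
      ALCArrow O X Y → ALCArrow O Y Z → ALCArrow O X Z
  | bot_le (X : ALCConcept CN RN) : ALCArrow O .bot X
  | le_top (X : ALCConcept CN RN) : ALCArrow O X .top
  | gci {E F : ALCConcept CN RN} (h : (E, F) ∈ O) :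
      ALCArrow O .top (.sup (.neg E) F)
  | sup_left (C D : ALCConcept CN RN) : ALCArrow O C (.sup C D)
  | sup_right (C D : ALCConcept CN RN) : ALCArrow O D (.sup C D)
  | sup_univ {C D X : ALCConcept CN RN} :
      ALCArrow O C X → ALCArrow O D X → ALCArrow O (.sup C D) X
  | inf_left (C D : ALCConcept CN RN) : ALCArrow O (.inf C D) C
  | inf_right (C D : ALCConcept CN RN) : ALCArrow O (.inf C D) D
  | inf_univ {C D X : ALCConcept CN RN} :
      ALCArrow O X C → ALCArrow O X D → ALCArrow O X (.inf C D)
  | distrib (C D E : ALCConcept CN RN) :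
      ALCArrow O (.inf C (.sup D E)) (.sup (.inf C D) (.inf C E))
  | neg_bot (C : ALCConcept CN RN) : ALCArrow O (.inf C (.neg C)) .bot
  | neg_top (C : ALCConcept CN RN) : ALCArrow O .top (.sup C (.neg C))
  | neg_max {C X : ALCConcept CN RN} :
      ALCArrow O (.inf C X) .bot → ALCArrow O X (.neg C)
  | neg_min {C X : ALCConcept CN RN} :
      ALCArrow O .top (.sup C X) → ALCArrow O (.neg C) X
  | ex_bot {C : ALCConcept CN RN} (R : RN) :
      ALCArrow O C .bot → ALCArrow O (.ex R C) .bot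
  | ex_mono {C D : ALCConcept CN RN} (R : RN) :
      ALCArrow O C D → ALCArrow O (.ex R C) (.ex R D)
  | all_def1 (R : RN) (C : ALCConcept CN RN) :
      ALCArrow O (.all R C) (.neg (.ex R (.neg C)))
  | all_def2 (R : RN) (C : ALCConcept CN RN) :
      ALCArrow O (.neg (.ex R (.neg C))) (.all R C)
  | ex_all (R : RN) (C D : ALCConcept CN RN) :
      ALCArrow O (.inf (.ex R D) (.all R C)) (.ex R (.inf D C))


/- ===================== Auxiliary development ===================== -/

section Aux

variable {CN RN : Type} {O : Set (ALCConcept CN RN × ALCConcept CN RN)}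

/-! ### Derived arrows -/

lemma arr_inf_comm (C D : ALCConcept CN RN) :
    ALCArrow O (.inf C D) (.inf D C) :=
  .inf_univ (.inf_right C D) (.inf_left C D)

lemma arr_sup_comm (C D : ALCConcept CN RN) :
    ALCArrow O (.sup C D) (.sup D C) :=
  .sup_univ (.sup_right D C) (.sup_left D C)

lemma arr_inf_mono_left {C C' : ALCConcept CN RN} (D : ALCConcept CN RN)
    (h : ALCArrow O C C') : ALCArrow O (.inf C D) (.inf C' D) :=
  .inf_univ ((ALCArrow.inf_left C D).trans h) (.inf_right C D)

lemma arr_inf_mono_right {D D' : ALCConcept CN RN} (C : ALCConcept CN RN)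
    (h : ALCArrow O D D') : ALCArrow O (.inf C D) (.inf C D') :=
  .inf_univ (.inf_left C D) ((ALCArrow.inf_right C D).trans h)

lemma arr_dne (Y : ALCConcept CN RN) : ALCArrow O (.neg (.neg Y)) Y :=
  .neg_min ((ALCArrow.neg_top Y).trans (arr_sup_comm _ _))

lemma arr_contra {A B : ALCConcept CN RN} (h : ALCArrow O B A) :
    ALCArrow O (.neg A) (.neg B) :=
  .neg_max ((arr_inf_mono_left _ h).trans (.neg_bot A))

lemma arr_all_mono {C D : ALCConcept CN RN} (R : RN) (h : ALCArrow O C D) :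
    ALCArrow O (.all R C) (.all R D) :=
  (ALCArrow.all_def1 R C).trans
    ((arr_contra (.ex_mono R (arr_contra h))).trans (.all_def2 R D))

lemma arr_neg_top_bot : ALCArrow O (.neg (.top : ALCConcept CN RN)) .bot :=
  .neg_min (.sup_left .top .bot)

lemma arr_top_all_top (R : RN) :
    ALCArrow O (.top : ALCConcept CN RN) (.all R .top) := by
  have hbot : ALCArrow O (.ex R (.neg (.top : ALCConcept CN RN))) .bot :=
    .ex_bot R arr_neg_top_bot
  exact (ALCArrow.neg_max ((ALCArrow.inf_left _ _).trans hbot)).trans (.all_def2 R .top)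

lemma arr_inf_assoc (A B C : ALCConcept CN RN) :
    ALCArrow O (.inf A (.inf B C)) (.inf (.inf A B) C) :=
  .inf_univ (.inf_univ (.inf_left _ _) ((ALCArrow.inf_right _ _).trans (.inf_left _ _)))
    ((ALCArrow.inf_right _ _).trans (.inf_right _ _))

lemma arr_all_inf (R : RN) (A B : ALCConcept CN RN) :
    ALCArrow O (.inf (.all R A) (.all R B)) (.all R (.inf A B)) := by
  set N : ALCConcept CN RN := .neg (.inf A B) with hN
  -- inner contradiction: (N ⊓ A) ⊓ B ⟶ ⊥
  have hinner : ALCArrow O (.inf (.inf N A) B) .bot := by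
    have h1 : ALCArrow O (.inf (.inf N A) B) (.inf (.inf A B) N) :=
      .inf_univ (.inf_univ ((ALCArrow.inf_left _ _).trans (.inf_right _ _)) (.inf_right _ _))
        ((ALCArrow.inf_left _ _).trans (.inf_left _ _))
    exact h1.trans (.neg_bot (.inf A B))
  have h2 : ALCArrow O (.inf (.inf (.ex R N) (.all R A)) (.all R B)) .bot := by
    have e1 : ALCArrow O (.inf (.ex R N) (.all R A)) (.ex R (.inf N A)) := .ex_all R A N
    have e2 : ALCArrow O (.inf (.ex R (.inf N A)) (.all R B)) (.ex R (.inf (.inf N A) B)) :=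
      .ex_all R B (.inf N A)
    exact ((arr_inf_mono_left _ e1).trans e2).trans (.ex_bot R hinner)
  have h3 : ALCArrow O (.inf (.ex R N) (.inf (.all R A) (.all R B))) .bot :=
    (arr_inf_assoc _ _ _).trans h2
  exact (ALCArrow.neg_max h3).trans (.all_def2 R (.inf A B))

lemma arr_negex_allneg (R : RN) (C : ALCConcept CN RN) :
    ALCArrow O (.neg (.ex R C)) (.all R (.neg C)) :=
  (arr_contra (.ex_mono R (arr_dne C))).trans (.all_def2 R (.neg C))

lemma arr_negall_exneg (R : RN) (C : ALCConcept CN RN) :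
    ALCArrow O (.neg (.all R C)) (.ex R (.neg C)) :=
  (arr_contra (.all_def2 R C)).trans (arr_dne _)

lemma arr_disj_syll (A B : ALCConcept CN RN) :
    ALCArrow O (.inf (.sup A B) (.neg A)) B := by
  have h1 : ALCArrow O (.inf (.neg A) (.sup A B))
      (.sup (.inf (.neg A) A) (.inf (.neg A) B)) := .distrib _ _ _
  have h2 : ALCArrow O (.sup (.inf (.neg A) A) (.inf (.neg A) B)) B :=
    .sup_univ (((arr_inf_comm _ _).trans (.neg_bot A)).trans (.bot_le B)) (.inf_right _ _)
  exact (arr_inf_comm _ _).trans (h1.trans h2)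

/-! ### Conjunctions of finite lists -/

def ALCconj : List (ALCConcept CN RN) → ALCConcept CN RN
  | [] => .top
  | a :: l => .inf a (ALCconj l)

lemma conj_arrow_mem {L : List (ALCConcept CN RN)} {a : ALCConcept CN RN}
    (h : a ∈ L) : ALCArrow O (ALCconj L) a := by
  induction L with
  | nil => cases h
  | cons b l ih =>
    rcases List.mem_cons.mp h with rfl | h
    · exact .inf_left _ _
    · exact (ALCArrow.inf_right _ _).trans (ih h)

lemma arrow_conj {M : ALCConcept CN RN} {L : List (ALCConcept CN RN)}
    (h : ∀ a ∈ L, ALCArrow O M a) : ALCArrow O M (ALCconj L) := by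
  induction L with
  | nil => exact .le_top M
  | cons b l ih =>
    exact .inf_univ (h b (by simp)) (ih fun a ha => h a (by simp [ha]))

lemma conj_pair (a b : ALCConcept CN RN) :
    ALCArrow O (ALCconj [a, b]) (.inf a b) :=
  .inf_univ (conj_arrow_mem (by simp)) (conj_arrow_mem (by simp))

lemma conj_map_all (R : RN) (L : List (ALCConcept CN RN)) :
    ALCArrow O (ALCconj (L.map (.all R))) (.all R (ALCconj L)) := by
  induction L with
  | nil => exact arr_top_all_top R
  | cons a l ih =>
    simp only [List.map_cons, ALCconj]
    exact (arr_inf_mono_right _ ih).trans (arr_all_inf R a (ALCconj l))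

/-! ### Consistent and maximal consistent sets -/

def ALCCons (O : Set (ALCConcept CN RN × ALCConcept CN RN))
    (S : Set (ALCConcept CN RN)) : Prop :=
  ∀ L : List (ALCConcept CN RN), (∀ a ∈ L, a ∈ S) → ¬ ALCArrow O (ALCconj L) .bot

def ALCMCS (O : Set (ALCConcept CN RN × ALCConcept CN RN))
    (S : Set (ALCConcept CN RN)) : Prop :=
  ALCCons O S ∧ ∀ T, ALCCons O T → S ⊆ T → T ⊆ S

lemma mcs_mem_of_conj {S : Set (ALCConcept CN RN)} (hS : ALCMCS O S)
    {L : List (ALCConcept CN RN)} {b : ALCConcept CN RN}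
    (hL : ∀ a ∈ L, a ∈ S) (h : ALCArrow O (ALCconj L) b) : b ∈ S := by
  classical
  by_contra hb
  have hic : ¬ ALCCons O (insert b S) := fun hc =>
    hb (hS.2 _ hc (Set.subset_insert _ _) (Set.mem_insert _ _))
  rw [ALCCons] at hic
  push_neg at hic
  obtain ⟨L', hL', hbot⟩ := hic
  set M := L ++ L'.filter (fun a => decide (a ∈ S)) with hM
  have hMS : ∀ a ∈ M, a ∈ S := by
    intro a ha
    rcases List.mem_append.mp ha with h1 | h2
    · exact hL a h1
    · simpa using (List.mem_filter.mp h2).2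
  have hMb : ALCArrow O (ALCconj M) b :=
    (arrow_conj fun a ha => conj_arrow_mem (List.mem_append_left _ ha)).trans h
  have hML' : ALCArrow O (ALCconj M) (ALCconj L') := by
    refine arrow_conj fun a ha => ?_
    rcases hL' a ha with rfl | haS
    · exact hMb
    · exact conj_arrow_mem (List.mem_append_right _ (List.mem_filter.mpr ⟨ha, by simpa⟩))
  exact hS.1 M hMS (hML'.trans hbot)

lemma mcs_mem_of_arrow {S : Set (ALCConcept CN RN)} (hS : ALCMCS O S)
    {a b : ALCConcept CN RN} (ha : a ∈ S) (h : ALCArrow O a b) : b ∈ S :=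
  mcs_mem_of_conj hS (L := [a]) (by simpa)
    ((ALCArrow.inf_left a .top).trans h)

lemma mcs_top_mem {S : Set (ALCConcept CN RN)} (hS : ALCMCS O S) :
    (.top : ALCConcept CN RN) ∈ S :=
  mcs_mem_of_conj hS (L := []) (by simp) (.refl _)

lemma mcs_pair_bot {S : Set (ALCConcept CN RN)} (hS : ALCMCS O S)
    {a : ALCConcept CN RN} (h1 : a ∈ S) (h2 : .neg a ∈ S) : False :=
  hS.1 [a, .neg a] (by simp [h1, h2]) ((conj_pair a (.neg a)).trans (.neg_bot a))

lemma mcs_neg_mem {S : Set (ALCConcept CN RN)} (hS : ALCMCS O S)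
    {a : ALCConcept CN RN} (ha : a ∉ S) : .neg a ∈ S := by
  classical
  have hic : ¬ ALCCons O (insert a S) := fun hc =>
    ha (hS.2 _ hc (Set.subset_insert _ _) (Set.mem_insert _ _))
  rw [ALCCons] at hic
  push_neg at hic
  obtain ⟨L, hL, hbot⟩ := hic
  set M := L.filter (fun c => decide (c ∈ S)) with hMdef
  have hMS : ∀ c ∈ M, c ∈ S := fun c hc => by simpa using (List.mem_filter.mp hc).2
  have hkey : ALCArrow O (ALCconj (a :: M)) (ALCconj L) := by
    refine arrow_conj fun c hc => ?_
    rcases hL c hc with rfl | hcS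
    · exact conj_arrow_mem (by simp)
    · exact conj_arrow_mem (List.mem_cons_of_mem _ (List.mem_filter.mpr ⟨hc, by simpa⟩))
  have hmb : ALCArrow O (.inf a (ALCconj M)) ALCConcept.bot := hkey.trans hbot
  exact mcs_mem_of_conj hS hMS (ALCArrow.neg_max hmb)

lemma mcs_neg_iff {S : Set (ALCConcept CN RN)} (hS : ALCMCS O S)
    (a : ALCConcept CN RN) : .neg a ∈ S ↔ a ∉ S :=
  ⟨fun h ha => mcs_pair_bot hS ha h, mcs_neg_mem hS⟩

lemma mcs_inf_iff {S : Set (ALCConcept CN RN)} (hS : ALCMCS O S)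
    (a b : ALCConcept CN RN) : .inf a b ∈ S ↔ a ∈ S ∧ b ∈ S := by
  constructor
  · intro h
    exact ⟨mcs_mem_of_arrow hS h (.inf_left a b), mcs_mem_of_arrow hS h (.inf_right a b)⟩
  · rintro ⟨ha, hb⟩
    exact mcs_mem_of_conj hS (L := [a, b]) (by simp [ha, hb]) (conj_pair a b)

lemma mcs_sup_iff {S : Set (ALCConcept CN RN)} (hS : ALCMCS O S)
    (a b : ALCConcept CN RN) : .sup a b ∈ S ↔ a ∈ S ∨ b ∈ S := by
  constructor
  · intro h
    by_cases ha : a ∈ S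
    · exact Or.inl ha
    · refine Or.inr (mcs_mem_of_conj hS (L := [.sup a b, .neg a])
        (by simp [h, mcs_neg_mem hS ha]) ?_)
      exact (conj_pair _ _).trans (arr_disj_syll a b)
  · rintro (h | h)
    · exact mcs_mem_of_arrow hS h (.sup_left a b)
    · exact mcs_mem_of_arrow hS h (.sup_right a b)

/-! ### Lindenbaum lemma -/

lemma chain_bound {c : Set (Set (ALCConcept CN RN))} (hc : IsChain (· ⊆ ·) c)
    (hne : c.Nonempty) (L : List (ALCConcept CN RN)) (hL : ∀ a ∈ L, a ∈ ⋃₀ c) :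
    ∃ s ∈ c, ∀ a ∈ L, a ∈ s := by
  induction L with
  | nil => exact ⟨hne.choose, hne.choose_spec, by simp⟩
  | cons b l ih =>
    obtain ⟨s, hs, hsl⟩ := ih fun a ha => hL a (List.mem_cons_of_mem _ ha)
    obtain ⟨t, ht, hbt⟩ := hL b (by simp)
    rcases eq_or_ne s t with rfl | hst
    · refine ⟨s, hs, fun a ha => ?_⟩
      rcases List.mem_cons.mp ha with rfl | ha
      · exact hbt
      · exact hsl a ha
    rcases hc hs ht hst with h | h
    · refine ⟨t, ht, fun a ha => ?_⟩
      rcases List.mem_cons.mp ha with rfl | ha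
      · exact hbt
      · exact h (hsl a ha)
    · refine ⟨s, hs, fun a ha => ?_⟩
      rcases List.mem_cons.mp ha with rfl | ha
      · exact h hbt
      · exact hsl a ha

lemma lindenbaum {S : Set (ALCConcept CN RN)} (h : ALCCons O S) :
    ∃ M, S ⊆ M ∧ ALCMCS O M := by
  have H : ∀ c ⊆ {T | ALCCons O T}, IsChain (· ⊆ ·) c → c.Nonempty →
      ∃ ub ∈ {T | ALCCons O T}, ∀ s ∈ c, s ⊆ ub := by
    intro c hc hchain hne
    refine ⟨⋃₀ c, ?_, fun s hs => Set.subset_sUnion_of_mem hs⟩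
    intro L hL hbot
    obtain ⟨s, hs, hsl⟩ := chain_bound hchain hne L hL
    exact hc hs L hsl hbot
  obtain ⟨m, hSm, hm⟩ := zorn_subset_nonempty {T | ALCCons O T} H S h
  exact ⟨m, hSm, hm.1, fun T hT hmT => hm.2 hT hmT⟩

/-! ### Existence lemma -/

lemma exists_succ {S : Set (ALCConcept CN RN)} (hS : ALCMCS O S) {R : RN}
    {X : ALCConcept CN RN} (h : .ex R X ∈ S) :
    ∃ T, ALCMCS O T ∧ (∀ Y, .all R Y ∈ S → Y ∈ T) ∧ X ∈ T := by
  classical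
  have hcons : ALCCons O (insert X {Y | (.all R Y : ALCConcept CN RN) ∈ S}) := by
    intro L hL hbot
    set Ys := L.filter (fun a => decide ((.all R a : ALCConcept CN RN) ∈ S)) with hYs
    have h1 : ALCArrow O (ALCconj (X :: Ys)) (ALCconj L) := by
      refine arrow_conj fun a ha => ?_
      rcases hL a ha with rfl | haS
      · exact conj_arrow_mem (by simp)
      · exact conj_arrow_mem (List.mem_cons_of_mem _ (List.mem_filter.mpr ⟨ha, by simpa using haS⟩))
    have h2 : ALCArrow O (.inf X (ALCconj Ys)) ALCConcept.bot := h1.trans hbot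
    have h3 : ALCArrow O (ALCconj Ys) (.neg X) := .neg_max h2
    have h4 : (.all R (ALCconj Ys) : ALCConcept CN RN) ∈ S := by
      refine mcs_mem_of_conj hS (L := Ys.map (.all R)) ?_ (conj_map_all R Ys)
      intro a ha
      obtain ⟨b, hb, rfl⟩ := List.mem_map.mp ha
      simpa using (List.mem_filter.mp hb).2
    have h5 : (.all R (.neg X) : ALCConcept CN RN) ∈ S :=
      mcs_mem_of_arrow hS h4 (arr_all_mono R h3)
    exact hS.1 [.ex R X, .all R (.neg X)] (by simp [h, h5])
      ((conj_pair _ _).trans ((ALCArrow.ex_all R (.neg X) X).trans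
        (.ex_bot R (.neg_bot X))))
  obtain ⟨T, hsub, hT⟩ := lindenbaum hcons
  exact ⟨T, hT, fun Y hY => hsub (Set.mem_insert_of_mem _ hY), hsub (Set.mem_insert _ _)⟩

/-! ### Canonical model -/

noncomputable def ALCcanon (O : Set (ALCConcept CN RN × ALCConcept CN RN))
    (h : ∃ S, ALCMCS O S) : ALCInterp CN RN where
  Δ := {S : Set (ALCConcept CN RN) // ALCMCS O S}
  nonempty := ⟨⟨h.choose, h.choose_spec⟩⟩
  conceptI A := {S | .atom A ∈ S.val}
  roleI R := {p | ∀ Y, .all R Y ∈ p.1.val → Y ∈ p.2.val}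

lemma truth_lemma (h : ∃ S, ALCMCS O S) (X : ALCConcept CN RN)
    (S : (ALCcanon O h).Δ) :
    S ∈ (ALCcanon O h).interp X ↔ X ∈ S.val := by
  induction X generalizing S with
  | atom A => exact Iff.rfl
  | top => simpa [ALCInterp.interp] using mcs_top_mem S.prop
  | bot =>
    simp only [ALCInterp.interp, Set.mem_empty_iff_false, false_iff]
    intro hb
    exact S.prop.1 [.bot] (by simpa) (.inf_left _ _)
  | neg C ih =>
    simp only [ALCInterp.interp, Set.mem_compl_iff, ih]
    exact (mcs_neg_iff S.prop C).symm
  | inf C D ihC ihD =>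
    simp only [ALCInterp.interp, Set.mem_inter_iff, ihC, ihD]
    exact (mcs_inf_iff S.prop C D).symm
  | sup C D ihC ihD =>
    simp only [ALCInterp.interp, Set.mem_union, ihC, ihD]
    exact (mcs_sup_iff S.prop C D).symm
  | ex R C ih =>
    constructor
    · rintro ⟨T, hRT, hTC⟩
      have hC : C ∈ T.val := (ih T).mp hTC
      by_contra hnot
      have hneg : (.neg (.ex R C) : ALCConcept CN RN) ∈ S.val := mcs_neg_mem S.prop hnot
      have hall : (.all R (.neg C) : ALCConcept CN RN) ∈ S.val :=
        mcs_mem_of_arrow S.prop hneg (arr_negex_allneg R C)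
      exact mcs_pair_bot T.prop hC (hRT _ hall)
    · intro hex
      obtain ⟨T, hT, hRT, hC⟩ := exists_succ S.prop hex
      exact ⟨⟨T, hT⟩, hRT, (ih _).mpr hC⟩
  | all R C ih =>
    constructor
    · intro hall
      by_contra hn
      have hneg : (.neg (.all R C) : ALCConcept CN RN) ∈ S.val := mcs_neg_mem S.prop hn
      have hexneg : (.ex R (.neg C) : ALCConcept CN RN) ∈ S.val :=
        mcs_mem_of_arrow S.prop hneg (arr_negall_exneg R C)
      obtain ⟨T, hT, hRT, hnC⟩ := exists_succ S.prop hexneg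
      have hC : C ∈ T := (ih (⟨T, hT⟩ : (ALCcanon O h).Δ)).mp (hall _ hRT)
      exact mcs_pair_bot hT hC hnC
    · intro hall T hRT
      exact (ih T).mpr (hRT C hall)

lemma canon_isModel (h : ∃ S, ALCMCS O S) : (ALCcanon O h).isModel O := by
  rintro ⟨E, F⟩ hEF S hSE
  have hE : E ∈ S.val := (truth_lemma h E S).mp hSE
  have htop : (.sup (.neg E) F : ALCConcept CN RN) ∈ S.val :=
    mcs_mem_of_arrow S.prop (mcs_top_mem S.prop) (.gci hEF)
  rcases (mcs_sup_iff S.prop _ _).mp htop with hne | hF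
  · exact absurd hE ((mcs_neg_iff S.prop E).mp hne)
  · exact (truth_lemma h F S).mpr hF

/-! ### Soundness -/

lemma arrow_sound {X Y : ALCConcept CN RN} (h : ALCArrow O X Y) :
    ∀ I : ALCInterp CN RN, I.isModel O → I.interp X ⊆ I.interp Y := by
  induction h with
  | refl X => exact fun I _ => subset_rfl
  | trans h1 h2 ih1 ih2 => exact fun I hI => (ih1 I hI).trans (ih2 I hI)
  | bot_le X => intro I _ x hx; simp [ALCInterp.interp] at hx
  | le_top X => intro I _ x _; simp [ALCInterp.interp]
  | gci hEF =>
    rename_i E F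
    intro I hI x _
    have := hI _ hEF
    simp only [ALCInterp.interp, Set.mem_union, Set.mem_compl_iff]
    by_cases hx : x ∈ I.interp E
    · exact Or.inr (this hx)
    · exact Or.inl hx
  | sup_left C D => intro I _ x hx; exact Or.inl hx
  | sup_right C D => intro I _ x hx; exact Or.inr hx
  | sup_univ h1 h2 ih1 ih2 =>
    intro I hI x hx
    rcases hx with hx | hx
    · exact ih1 I hI hx
    · exact ih2 I hI hx
  | inf_left C D => intro I _ x hx; exact hx.1
  | inf_right C D => intro I _ x hx; exact hx.2
  | inf_univ h1 h2 ih1 ih2 => intro I hI x hx; exact ⟨ih1 I hI hx, ih2 I hI hx⟩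
  | distrib C D E =>
    intro I _ x hx
    obtain ⟨hC, hDE⟩ := hx
    rcases hDE with hD | hE
    · exact Or.inl ⟨hC, hD⟩
    · exact Or.inr ⟨hC, hE⟩
  | neg_bot C => intro I _ x hx; exact hx.2 hx.1
  | neg_top C =>
    intro I _ x _
    simp only [ALCInterp.interp, Set.mem_union, Set.mem_compl_iff]
    exact or_not
  | neg_max h ih =>
    intro I hI x hx hC
    exact ih I hI ⟨hC, hx⟩
  | neg_min h ih =>
    intro I hI x hx
    rcases ih I hI (Set.mem_univ x) with hC | hX
    · exact absurd hC hx
    · exact hX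
  | ex_bot R h ih =>
    intro I hI x hx
    obtain ⟨y, _, hy⟩ := hx
    exact (Set.notMem_empty y (ih I hI hy)).elim
  | ex_mono R h ih =>
    intro I hI x hx
    obtain ⟨y, hxy, hy⟩ := hx
    exact ⟨y, hxy, ih I hI hy⟩
  | all_def1 R C =>
    intro I _ x hx
    rintro ⟨y, hxy, hy⟩
    exact hy (hx y hxy)
  | all_def2 R C =>
    intro I _ x hx y hxy
    by_contra hy
    exact hx ⟨y, hxy, hy⟩
  | ex_all R C D =>
    intro I _ x hx
    obtain ⟨⟨y, hxy, hyD⟩, hall⟩ := hx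
    exact ⟨y, hxy, hyD, hall y hxy⟩

end Aux


/-- Equivalence of category-theoretical and set-theoretical unsatisfiability
(Theorem 2). -/
theorem cat_unsat_iff_set_unsat {CN RN : Type}
    (O : Set (ALCConcept CN RN × ALCConcept CN RN)) (hfin : O.Finite)
    (C : ALCConcept CN RN) :
    ALCArrow O C .bot ↔
      ∀ I : ALCInterp CN RN, I.isModel O → I.interp C = ∅ := by
  constructor
  · intro h I hI
    rw [Set.eq_empty_iff_forall_notMem]
    intro x hx
    have := arrow_sound h I hI hx
    simp [ALCInterp.interp] at this
  · intro hI
    by_contra hC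
    have hcons : ALCCons O {C} := by
      intro L hL hbot
      refine hC (ALCArrow.trans (arrow_conj fun a ha => ?_) hbot)
      rcases hL a ha with rfl
      exact .refl _
    obtain ⟨S0, hsub, hS0⟩ := lindenbaum hcons
    have hex : ∃ S, ALCMCS O S := ⟨S0, hS0⟩
    have := hI (ALCcanon O hex) (canon_isModel hex)
    have hmem : (⟨S0, hS0⟩ : (ALCcanon O hex).Δ) ∈ (ALCcanon O hex).interp C :=
      (truth_lemma hex C _).mpr (hsub rfl)
    rw [this] at hmem
    exact hmem
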